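/- Let L be an n×n matrix over a commutative ring such that every column of L sums to 0 (i.e., Σ_i L_{ij} = 0 for every j). Then within each column the cofactors are all equal: for every j and all i, k, the (i,j) cofactor of L equals the (k,j) cofactor of L. -/

import Mathlib

/-- The `(i,j)` cofactor of an `(n+1) × (n+1)` matrix `L`: `(-1)^(i+j)` times the
determinant of the matrix obtained from `L` by deleting row `i` and column `j`. -/
def cofactor {R : Type} [CommRing R] {n : ℕ}
    (L : Matrix (Fin (n + 1)) (Fin (n + 1)) R) (i j : Fin (n + 1)) : R :=
  (-1 : R) ^ ((i : ℕ) + (j : ℕ)) * (L.submatrix i.succAbove j.succAbove).det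

namespace Matrix

theorem updateRow_updateRow_eq_submatrix_swap {m n α : Type*} [DecidableEq m] (A : Matrix m n α)
    {i k : m} (hik : i ≠ k) (v : n → α) :
    (A.updateRow i v).updateRow k (A i) = (A.updateRow k v).submatrix (Equiv.swap i k) id := by
  ext a b
  simp only [updateRow_apply, submatrix_apply, id, Equiv.swap_apply_def]
  split_ifs <;> simp_all

variable {n R : Type*} [Fintype n] [DecidableEq n] [CommRing R]

theorem sum_updateRow_of_sum_eq_zero {A : Matrix n n R} (hA : ∀ j, ∑ m, A m j = 0) (i : n)
    (v : n → R) : ∑ m, A.updateRow i v m = v - A i := by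
  ext j
  refine (Finset.sum_apply j _ fun m => A.updateRow i v m).trans ?_
  have hrest : ∑ m ∈ Finset.univ.erase i, A.updateRow i v m j = -A i j := by
    rw [Finset.sum_congr rfl fun m hm => by rw [updateRow_ne (Finset.ne_of_mem_erase hm)],
      Finset.sum_erase_eq_sub (Finset.mem_univ i), hA, zero_sub]
  rw [← Finset.add_sum_erase _ _ (Finset.mem_univ i), updateRow_self, hrest, Pi.sub_apply,
    sub_eq_add_neg]

/-- Adding all rows of `A.updateRow i v` to its row `k` turns that row into `v - A i`; the `v`
part gives a repeated row and the `A i` part is `A.updateRow k v` with rows `i`, `k` swapped. -/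
theorem det_updateRow_eq_of_sum_eq_zero {A : Matrix n n R} (hA : ∀ j, ∑ m, A m j = 0)
    (v : n → R) (i k : n) : (A.updateRow i v).det = (A.updateRow k v).det := by
  rcases eq_or_ne i k with rfl | hik
  · rfl
  calc (A.updateRow i v).det
      = ((A.updateRow i v).updateRow k (∑ m, (1 : R) • A.updateRow i v m)).det := by
        rw [det_updateRow_sum, one_smul]
    _ = ((A.updateRow i v).updateRow k v).det - ((A.updateRow i v).updateRow k (A i)).det := by
        simp only [one_smul]
        rw [sum_updateRow_of_sum_eq_zero hA, sub_eq_add_neg, ← neg_one_smul R (A i),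
          det_updateRow_add, det_updateRow_smul]
        ring
    _ = (A.updateRow k v).det := by
        rw [det_zero_of_row_eq hik (by rw [updateRow_self, updateRow_ne hik, updateRow_self]),
          updateRow_updateRow_eq_submatrix_swap A hik,
          det_permute, Equiv.Perm.sign_swap hik]
        simp

end Matrix

theorem cofactor_eq_adjugate {R : Type} [CommRing R] {n : ℕ}
    (L : Matrix (Fin (n + 1)) (Fin (n + 1)) R) (i j : Fin (n + 1)) :
    cofactor L i j = L.adjugate j i := by
  rw [Matrix.adjugate_fin_succ_eq_det_submatrix, cofactor, add_comm]

/-- If every column of a square matrix `L` over a commutative ring sums to `0`,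
then within each column the cofactors are all equal. -/
theorem cofactors_col_equal {R : Type} [CommRing R] {n : ℕ}
    (L : Matrix (Fin (n + 1)) (Fin (n + 1)) R)
    (hcol : ∀ j, ∑ i, L i j = 0)
    (i k j : Fin (n + 1)) :
    cofactor L i j = cofactor L k j := by
  rw [cofactor_eq_adjugate, cofactor_eq_adjugate, Matrix.adjugate_apply, Matrix.adjugate_apply,
    Matrix.det_updateRow_eq_of_sum_eq_zero hcol]
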